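/- Let N > 1 be an integer and let f ∈ S_2(Γ_0(N)) be a normalized newform. If α ∈ SL_2(ℤ) satisfies f|[α] = f (weight-2 slash action), then α ∈ Γ_0(N). -/

import Mathlib

/-!
Replacing `α` by `α T^j`, which lies in the same coset of `Γ₀(N)`, we may assume that its lower
right entry `d` is prime to `N`. Write `α = (a b; c d)` and pick `γ ∈ Γ₀(N)` with bottom row
`(N b, d)`. With the Fricke matrix `W_N = (0 -1; N 0)` one computes
`γ W_N α W_N = -N (1 t; 0 1)`, `t = γ₀₁ a - γ₀₀ c / N`. As `f` is fixed by `γ` and `α` and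
`f ∣ W_N = ± f`, it is invariant under `z ↦ z + t`. Since `f = q + O(q²)` in `q = e^{2πiz}`,
comparing derivatives in `q` at `0` gives `e^{2πit} = 1`, so `t ∈ ℤ`. Hence `N ∣ γ₀₀ c`, and
`γ₀₀` is prime to `N` because `det γ = 1`.
-/

open UpperHalfPlane ModularForm Complex

/-- The old subspace of `S₂(Γ₀(N))`: the span of the functions `z ↦ g(dz)` where
`g` runs over cusp forms of weight 2 and level `M ∣ N`, `M ≠ N`, and `d ∣ N/M`. -/
noncomputable def oldSpace (N : ℕ) : Submodule ℂ (UpperHalfPlane → ℂ) :=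
  Submodule.span ℂ {F : UpperHalfPlane → ℂ | ∃ M : ℕ, M ∣ N ∧ M ≠ N ∧ ∃ d : ℕ,
    d ∣ N / M ∧ ∃ g : CuspForm (CongruenceSubgroup.Gamma0 M) 2,
      ∀ z w : UpperHalfPlane, (w : ℂ) = (d : ℂ) * (z : ℂ) → F z = g w}

/-- `f ∈ S₂(Γ₀(N))` is a normalized newform: it has a `q`-expansion
`f = Σ_{n ≥ 1} a_n q^n` with `a_1 = 1` (normalized), it is new at level `N`
(not in the old subspace), and it is an eigenform of the Fricke involution
`w_N : z ↦ -1/(Nz)` (a consequence of being a Hecke eigenform new at level `N`),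
i.e. `f(-1/(Nz)) = ± N z² f(z)`. -/
noncomputable def IsNormalizedNewform (N : ℕ)
    (f : CuspForm (CongruenceSubgroup.Gamma0 N) 2) : Prop :=
  (∃ a : ℕ → ℂ, a 0 = 0 ∧ a 1 = 1 ∧ ∀ z : UpperHalfPlane,
      f z = ∑' n : ℕ, a n * Complex.exp (2 * Real.pi * Complex.I * n * (z : ℂ))) ∧
  (⇑f ∉ oldSpace N) ∧
  (∃ ε : ℂ, ε ^ 2 = 1 ∧ ∀ z w : UpperHalfPlane,
      (w : ℂ) = -1 / ((N : ℂ) * (z : ℂ)) → f w = ε * N * (z : ℂ) ^ 2 * f z)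

open Filter Topology Matrix MatrixGroups Function.Periodic CongruenceSubgroup

theorem hasDerivAt_tsum_mul_pow_zero {a : ℕ → ℂ} {w₀ : ℂ} (hw₀ : w₀ ≠ 0)
    (hsum : Summable fun n ↦ a n * w₀ ^ n) :
    HasDerivAt (fun w ↦ ∑' n, a n * w ^ n) (a 1) 0 := by
  set p := FormalMultilinearSeries.ofScalars ℂ a
  have hradius : (‖w₀‖₊ : ENNReal) ≤ p.radius := by
    refine p.le_radius_of_tendsto (l := 0) ?_
    simpa [p, FormalMultilinearSeries.ofScalars_norm] using hsum.tendsto_atTop_zero.norm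
  have hp := (p.hasFPowerSeriesOnBall
    (lt_of_lt_of_le (by simpa using hw₀) hradius)).hasFPowerSeriesAt.hasDerivAt
  have hsum_eq : p.sum = fun w ↦ ∑' n, a n * w ^ n :=
    FormalMultilinearSeries.ofScalarsSum_eq_tsum a
  simpa [p, hsum_eq, FormalMultilinearSeries.ofScalars_apply_eq] using hp

theorem eq_one_of_tsum_mul_pow_comp_mul {a : ℕ → ℂ} (ha1 : a 1 = 1) {w₀ : ℂ} (hw₀ : w₀ ≠ 0)
    (hsum : Summable fun n ↦ a n * w₀ ^ n) {u : ℂ}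
    (hu : ∀ᶠ w in 𝓝 0, ∑' n, a n * (u * w) ^ n = ∑' n, a n * w ^ n) : u = 1 := by
  have hP := hasDerivAt_tsum_mul_pow_zero hw₀ hsum
  rw [ha1] at hP
  have hPu : HasDerivAt (fun w ↦ ∑' n, a n * (u * w) ^ n) (1 * u) 0 :=
    (mul_zero u ▸ hP).comp 0 ((hasDerivAt_id 0).const_mul u |>.congr_deriv (mul_one u))
  simpa using (hPu.congr_of_eventuallyEq (hu.mono fun w hw ↦ hw.symm)).unique hP

/-- In the variable `q = exp (2πiz)`, translation by `t` is multiplication by `exp (2πit)`. -/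
theorem exists_int_eq_of_vadd_invariant {a : ℕ → ℂ} (ha1 : a 1 = 1) {F : ℍ → ℂ}
    (hF : ∀ z : ℍ, F z = ∑' n : ℕ, a n * Complex.exp (2 * Real.pi * Complex.I * n * z))
    (hF0 : F ≠ 0) {t : ℝ} (ht : ∀ z : ℍ, F (t +ᵥ z) = F z) : ∃ k : ℤ, t = k := by
  have hq : ∀ z : ℍ, F z = ∑' n, a n * qParam 1 z ^ n := fun z ↦ by
    rw [hF z]
    refine tsum_congr fun n ↦ ?_
    rw [qParam, ofReal_one, div_one, ← Complex.exp_nat_mul]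
    ring_nf
  obtain ⟨z₀, hz₀⟩ : ∃ z₀, F z₀ ≠ 0 := by
    by_contra! h
    exact hF0 (funext h)
  have hsum : Summable fun n ↦ a n * qParam 1 z₀ ^ n := by
    by_contra h
    exact hz₀ (by rw [hq, tsum_eq_zero_of_not_summable h])
  have hu : ∀ᶠ w in 𝓝 0, ∑' n, a n * (Complex.exp (2 * Real.pi * Complex.I * t) * w) ^ n =
      ∑' n, a n * w ^ n := by
    filter_upwards [Metric.ball_mem_nhds (0 : ℂ) one_pos] with w hw
    rcases eq_or_ne w 0 with rfl | hw0
    · simp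
    let z : ℍ := ⟨invQParam 1 w,
      im_invQParam_pos_of_norm_lt_one one_pos (mem_ball_zero_iff.mp hw) hw0⟩
    have hz : qParam 1 z = w := qParam_right_inv one_ne_zero hw0
    have hvz : qParam 1 (t +ᵥ z : ℍ) = Complex.exp (2 * Real.pi * Complex.I * t) * w := by
      rw [← hz, coe_vadd, qParam, qParam, ← Complex.exp_add, ofReal_one, div_one, div_one]
      ring_nf
    rw [← hvz, ← hz, ← hq, ← hq, ht]
  obtain ⟨k, hk⟩ := Complex.exp_eq_one_iff.mp
    (eq_one_of_tsum_mul_pow_comp_mul ha1 (qParam_ne_zero _) hsum hu)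
  refine ⟨k, Complex.ofReal_injective ?_⟩
  apply mul_left_cancel₀ Complex.two_pi_I_ne_zero
  push_cast
  linear_combination hk

lemma σ_apply_of_det_pos {g : GL (Fin 2) ℝ} (hg : 0 < g.det.val) (z : ℂ) : σ g z = z := by
  rw [σ, if_pos hg, ContinuousAlgEquiv.refl_apply]

noncomputable def fricke (N : ℕ) [NeZero N] : GL (Fin 2) ℝ :=
  GeneralLinearGroup.mkOfDetNeZero !![0, -1; (N : ℝ), 0] (by simp [det_fin_two_of, NeZero.ne])

lemma val_det_fricke (N : ℕ) [NeZero N] : (fricke N).det.val = N := by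
  simp [fricke, det_fin_two_of]

lemma val_det_fricke_pos (N : ℕ) [NeZero N] : 0 < (fricke N).det.val :=
  val_det_fricke N ▸ Nat.cast_pos.mpr (NeZero.pos N)

lemma slash_fricke_eq_smul {N : ℕ} [NeZero N] {F : ℍ → ℂ} {ε : ℂ}
    (h : ∀ z w : ℍ, (w : ℂ) = -1 / ((N : ℂ) * z) → F w = ε * N * (z : ℂ) ^ 2 * F z) :
    F ∣[(2 : ℤ)] fricke N = ε • F := by
  have hN : (N : ℂ) ≠ 0 := Nat.cast_ne_zero.mpr (NeZero.ne N)
  ext z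
  have hz : ((fricke N • z : ℍ) : ℂ) = -1 / ((N : ℂ) * z) := by
    rw [coe_smul_of_det_pos (val_det_fricke_pos N)]
    simp [num, denom, fricke]
  have hden : denom (fricke N) z = N * z := by simp [denom, fricke]
  have := ne_zero z
  rw [slash_apply, σ_apply_of_det_pos (val_det_fricke_pos N), h z _ hz, hden, val_det_fricke N,
    Pi.smul_apply, smul_eq_mul]
  simp only [Nat.abs_cast, Complex.ofReal_natCast]
  norm_num
  field_simp

lemma slash_two_apply_of_scalar_mul_translation {g : GL (Fin 2) ℝ} (h10 : g 1 0 = 0)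
    (h11 : g 1 1 = g 0 0) (F : ℍ → ℂ) (z : ℍ) :
    (F ∣[(2 : ℤ)] g) z = F ((g 0 1 / g 0 0) +ᵥ z) := by
  have hdet : (g : Matrix (Fin 2) (Fin 2) ℝ).det = g 0 0 ^ 2 := by
    rw [det_fin_two, h10, h11]; ring
  have h00 : g 0 0 ≠ 0 := fun h0 ↦
    GeneralLinearGroup.det_ne_zero g (by rw [hdet, h0, sq, zero_mul])
  have hpos : 0 < g.det.val := by rw [GeneralLinearGroup.val_det_apply, hdet]; positivity
  have h00' : (g 0 0 : ℂ) ≠ 0 := by exact_mod_cast h00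
  have hsmul : g • z = (g 0 1 / g 0 0) +ᵥ z := by
    ext
    rw [coe_smul_of_det_pos hpos, coe_vadd, num, denom, h10, h11, Complex.ofReal_zero, zero_mul,
      zero_add, Complex.ofReal_div]
    field_simp
    ring
  have hden : denom g z = g 0 0 := by simp [denom, h10, h11]
  rw [slash_apply, σ_apply_of_det_pos hpos, hsmul, hden, GeneralLinearGroup.val_det_apply, hdet]
  simp only [abs_pow, sq_abs, Complex.ofReal_pow]
  field_simp
  norm_num

lemma mul_fricke_mul_mul_fricke {N : ℕ} [NeZero N] {α γ : SL(2, ℤ)} (hγ10 : γ 1 0 = N * α 0 1)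
    (hγ11 : γ 1 1 = α 1 1) :
    (((γ : GL (Fin 2) ℝ) * fricke N * α * fricke N : GL (Fin 2) ℝ) : Matrix (Fin 2) (Fin 2) ℝ) =
      !![-(N : ℝ), γ 0 0 * α 1 0 - N * γ 0 1 * α 0 0; 0, -(N : ℝ)] := by
  have hα : (α 0 0 * α 1 1 - α 0 1 * α 1 0 : ℝ) = 1 := by
    exact_mod_cast (det_fin_two α.1).symm.trans α.2
  have hγ10' : (γ 1 0 : ℝ) = N * α 0 1 := by exact_mod_cast hγ10
  have hγ11' : (γ 1 1 : ℝ) = α 1 1 := by exact_mod_cast hγ11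
  have hγ : (γ 0 0 * α 1 1 - γ 0 1 * (N * α 0 1) : ℝ) = 1 := by
    rw [← hγ10', ← hγ11']
    exact_mod_cast (det_fin_two γ.1).symm.trans γ.2
  ext i j
  fin_cases i <;> fin_cases j
  all_goals simp only [fricke, Units.val_mul, SpecialLinearGroup.coe_GL_coe_matrix,
    SpecialLinearGroup.map_apply_coe, RingHom.mapMatrix_apply, Int.coe_castRingHom,
    GeneralLinearGroup.val_mkOfDetNeZero, mul_apply, map_apply, of_apply, cons_val', cons_val_fin_one,
    Fin.sum_univ_two, cons_val_zero, cons_val_one, Fin.isValue, Fin.zero_eta, Fin.mk_one, hγ10',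
    hγ11']
  · linear_combination (-N : ℝ) * hγ
  · ring
  · ring
  · linear_combination (-N : ℝ) * hα

theorem vadd_invariant_of_slash_fricke {N : ℕ} [NeZero N] {F : ℍ → ℂ} {ε : ℂ} (hε : ε ^ 2 = 1)
    (hW : F ∣[(2 : ℤ)] fricke N = ε • F) {α γ : SL(2, ℤ)} (hα : F ∣[(2 : ℤ)] α = F)
    (hγ : F ∣[(2 : ℤ)] γ = F) (hγ10 : γ 1 0 = N * α 0 1) (hγ11 : γ 1 1 = α 1 1) (z : ℍ) :
    F ((γ 0 1 * α 0 0 - γ 0 0 * α 1 0 / N : ℝ) +ᵥ z) = F z := by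
  set g : GL (Fin 2) ℝ := (γ : GL (Fin 2) ℝ) * fricke N * α * fricke N
  have hg : (g : Matrix (Fin 2) (Fin 2) ℝ) = _ := mul_fricke_mul_mul_fricke hγ10 hγ11
  have hFg : F ∣[(2 : ℤ)] g = F := by
    rw [SlashAction.slash_mul, SlashAction.slash_mul, SlashAction.slash_mul, ← SL_slash,
      ← SL_slash, hγ, hW, SL_smul_slash, hα, smul_slash, hW,
      σ_apply_of_det_pos (val_det_fricke_pos N), smul_smul, ← sq, hε, one_smul]
  have h := slash_two_apply_of_scalar_mul_translation (g := g) (by simp [hg]) (by simp [hg]) F z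
  rw [hFg, hg] at h
  convert h.symm using 3
  have hN : (N : ℝ) ≠ 0 := Nat.cast_ne_zero.mpr (NeZero.ne N)
  simp only [of_apply, cons_val', cons_val_zero, cons_val_one, cons_val_fin_one, Fin.isValue]
  field_simp
  ring

theorem exists_isCoprime_add_mul {c d N : ℤ} (hcd : IsCoprime c d) (hN : N ≠ 0) :
    ∃ j : ℤ, IsCoprime (d + j * c) N := by
  refine ⟨∏ p ∈ N.natAbs.primeFactors with ¬((p : ℕ) : ℤ) ∣ d, (p : ℤ), ?_⟩
  refine isCoprime_of_prime_dvd (fun h ↦ hN h.2) fun z hz hzx hzN ↦ ?_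
  rw [← Int.natAbs_dvd] at hzx hzN
  set p := z.natAbs
  have hp : p.Prime := Int.prime_iff_natAbs_prime.mp hz
  have hpZ : Prime (p : ℤ) := Nat.prime_iff_prime_int.mp hp
  have hpN : p ∈ N.natAbs.primeFactors :=
    Nat.mem_primeFactors.mpr ⟨hp, Int.natCast_dvd.mp hzN, Int.natAbs_ne_zero.mpr hN⟩
  by_cases hpd : (p : ℤ) ∣ d
  · have hpj : ¬(p : ℤ) ∣ ∏ q ∈ N.natAbs.primeFactors with ¬((q : ℕ) : ℤ) ∣ d, (q : ℤ) := by
      rw [hpZ.dvd_finsetProd_iff]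
      rintro ⟨q, hq, hpq⟩
      rw [Finset.mem_filter, Nat.mem_primeFactors] at hq
      rw [Int.natCast_dvd_natCast, Nat.prime_dvd_prime_iff_eq hp hq.1.1] at hpq
      exact hq.2 (hpq ▸ hpd)
    have hpc : ¬(p : ℤ) ∣ c := fun hpc ↦ hpZ.not_isUnit (hcd.isUnit_of_dvd' hpc hpd)
    exact (hpZ.dvd_mul.mp ((dvd_add_right hpd).mp hzx)).elim hpj hpc
  · exact hpd ((dvd_add_left ((Finset.dvd_prod_of_mem _
      (Finset.mem_filter.mpr ⟨hpN, hpd⟩)).mul_right c)).mp hzx)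

theorem exists_isCoprime_mul_T_zpow (α : SL(2, ℤ)) {N : ℤ} (hN : N ≠ 0) :
    ∃ j : ℤ, IsCoprime ((α * ModularGroup.T ^ j) 1 1) N := by
  have hcd : IsCoprime (α 1 0) (α 1 1) := ⟨-α 0 1, α 0 0, by
    linear_combination (det_fin_two α.1).symm.trans α.2⟩
  obtain ⟨j, hj⟩ := exists_isCoprime_add_mul hcd hN
  refine ⟨j, ?_⟩
  simpa [ModularGroup.coe_T_zpow, mul_apply, Fin.sum_univ_two, mul_comm, add_comm] using hj

theorem mem_Gamma0_of_isCoprime {N : ℕ} [NeZero N] {f : CuspForm (Gamma0 N) 2}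
    (hf : IsNormalizedNewform N f) {α : SL(2, ℤ)} (hα : ⇑f ∣[(2 : ℤ)] α = ⇑f)
    (hcop : IsCoprime (α 1 1) N) : α ∈ Gamma0 N := by
  obtain ⟨⟨a, -, ha1, hfa⟩, hnew, ε, hε, hfr⟩ := hf
  have hdetα : α 0 0 * α 1 1 - α 0 1 * α 1 0 = 1 := (det_fin_two α.1).symm.trans α.2
  have hrow : IsCoprime (N * α 0 1) (α 1 1) :=
    hcop.symm.mul_left ⟨-α 1 0, α 0 0, by linear_combination hdetα⟩
  obtain ⟨γ, -, hγrow⟩ := ModularGroup.bottom_row_surj (R := ℤ) (a := ![N * α 0 1, α 1 1]) hrow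
  have hγ10 : γ 1 0 = N * α 0 1 := congrFun hγrow 0
  have hγ11 : γ 1 1 = α 1 1 := congrFun hγrow 1
  have hγ : ⇑f ∣[(2 : ℤ)] γ = ⇑f :=
    SlashInvariantForm.slash_action_eqn f _ (Subgroup.mem_map_of_mem _ (by simp [hγ10]))
  obtain ⟨k, hk⟩ := exists_int_eq_of_vadd_invariant ha1 hfa (fun h ↦ hnew (h ▸ zero_mem _))
    (vadd_invariant_of_slash_fricke hε (slash_fricke_eq_smul hfr) hα hγ hγ10 hγ11)
  have hdvd : (N : ℤ) ∣ γ 0 0 * α 1 0 := ⟨γ 0 1 * α 0 0 - k, by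
    have hN : (N : ℝ) ≠ 0 := Nat.cast_ne_zero.mpr (NeZero.ne N)
    field_simp at hk
    exact_mod_cast (by linear_combination -hk : (γ 0 0 * α 1 0 : ℝ) = N * (γ 0 1 * α 0 0 - k))⟩
  have hγ00 : IsCoprime (γ 0 0) N := ⟨α 1 1, -(γ 0 1 * α 0 1), by
    linear_combination (det_fin_two γ.1).symm.trans γ.2 + γ 0 1 * hγ10 - γ 0 0 * hγ11⟩
  rw [Gamma0_mem, ZMod.intCast_zmod_eq_zero_iff_dvd]
  exact hγ00.symm.dvd_of_dvd_mul_left hdvd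

/-- let `N > 1` and let `f ∈ S₂(Γ₀(N))` be a normalized newform.
If `α ∈ SL₂(ℤ)` satisfies `f ∣[2] α = f`, then `α ∈ Γ₀(N)`. -/
theorem stmt2 (N : ℕ) (hN : 1 < N) (f : CuspForm (CongruenceSubgroup.Gamma0 N) 2)
    (hf : IsNormalizedNewform N f)
    (α : Matrix.SpecialLinearGroup (Fin 2) ℤ)
    (hα : (⇑f) ∣[(2 : ℤ)] α = ⇑f) :
    α ∈ CongruenceSubgroup.Gamma0 N := by
  have : NeZero N := ⟨by omega⟩
  obtain ⟨j, hj⟩ := exists_isCoprime_mul_T_zpow α (N := N) (by exact_mod_cast NeZero.ne N)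
  have hT : ModularGroup.T ^ j ∈ Gamma0 N := by simp [ModularGroup.coe_T_zpow]
  rw [← Subgroup.mul_mem_cancel_right _ hT]
  refine mem_Gamma0_of_isCoprime hf ?_ hj
  rw [SlashAction.slash_mul, hα]
  exact SlashInvariantForm.slash_action_eqn f _ (Subgroup.mem_map_of_mem _ hT)
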